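/- Let f : D → ℝ be smooth on D ⊆ ℝ^m open, with graph metric g_{ij} = δ_{ij} + f_i f_j and Laplace–Beltrami operator Δ and gradient ∇ taken with respect to g. Then the graph {(x, f(x)) : x ∈ D} is a biharmonic hypersurface of ℝ^{m+1} (i.e., all m+1 component functions of the isometric embedding φ(x) = (x, f(x)) satisfy Δ²u = 0) if and only if f solves the system: Δ²f = 0 and (Δf_k)·Δf + 2 g(∇f_k, ∇Δf) = 0 for all k = 1, …, m, where f_k = ∂f/∂x_k. -/

import Mathlib

open scoped Topology

/-- The Euclidean partial derivative `f_i = ∂f/∂x_i`. -/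
noncomputable def pderiv {m : ℕ} (f : EuclideanSpace ℝ (Fin m) → ℝ) (i : Fin m)
    (x : EuclideanSpace ℝ (Fin m)) : ℝ :=
  fderiv ℝ f x (EuclideanSpace.single i 1)

/-- The Euclidean gradient `∇₀f` as a vector in `ℝ^m`. -/
noncomputable def grad0 {m : ℕ} (f : EuclideanSpace ℝ (Fin m) → ℝ)
    (x : EuclideanSpace ℝ (Fin m)) : EuclideanSpace ℝ (Fin m) :=
  WithLp.toLp 2 (fun i => pderiv f i x)

/-- The graph metric `g_{ij} = δ_{ij} + f_i f_j`. -/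
noncomputable def gMat {m : ℕ} (f : EuclideanSpace ℝ (Fin m) → ℝ)
    (x : EuclideanSpace ℝ (Fin m)) : Matrix (Fin m) (Fin m) ℝ :=
  Matrix.of fun i j => (if i = j then (1 : ℝ) else 0) + pderiv f i x * pderiv f j x

/-- The Laplace–Beltrami operator of the graph metric applied to `f` itself:
`Δf = g^{ij} f_{ij} / (1 + |∇₀f|²)`. -/
noncomputable def lapg {m : ℕ} (f : EuclideanSpace ℝ (Fin m) → ℝ)
    (x : EuclideanSpace ℝ (Fin m)) : ℝ :=
  (∑ i : Fin m, ∑ j : Fin m, (gMat f x)⁻¹ i j * pderiv (pderiv f i) j x) /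
    (1 + ‖grad0 f x‖ ^ 2)


/-- The Laplace–Beltrami operator of the graph metric `g_{ij} = δ_{ij} + f_i f_j`,
`Δu = g^{ij} u_{ij} - (Δf) Σᵢ f_i u_i`. -/
noncomputable def lapBel {m : ℕ} (f u : EuclideanSpace ℝ (Fin m) → ℝ)
    (x : EuclideanSpace ℝ (Fin m)) : ℝ :=
  (∑ i : Fin m, ∑ j : Fin m, (gMat f x)⁻¹ i j * pderiv (pderiv u i) j x) -
    lapg f x * ∑ i : Fin m, pderiv f i x * pderiv u i x

/-- The metric inner product of gradients: `g(∇u, ∇v) = g^{ij} u_i v_j`. -/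
noncomputable def gInner {m : ℕ} (f u v : EuclideanSpace ℝ (Fin m) → ℝ)
    (x : EuclideanSpace ℝ (Fin m)) : ℝ :=
  ∑ i : Fin m, ∑ j : Fin m, (gMat f x)⁻¹ i j * pderiv u i x * pderiv v j x

section Aux

variable {m : ℕ} {D : Set (EuclideanSpace ℝ (Fin m))}

lemma norm_grad0_sq (f : EuclideanSpace ℝ (Fin m) → ℝ) (x) :
    ‖grad0 f x‖ ^ 2 = ∑ i, pderiv f i x ^ 2 := by
  rw [EuclideanSpace.norm_eq, Real.sq_sqrt (by positivity)]
  simp [grad0, Real.norm_eq_abs, sq_abs]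

lemma one_add_pos (f : EuclideanSpace ℝ (Fin m) → ℝ) (x) :
    (0:ℝ) < 1 + ‖grad0 f x‖ ^ 2 := by positivity

/-- Sherman–Morrison: explicit inverse of the graph metric. -/
lemma ginv_eq (f : EuclideanSpace ℝ (Fin m) → ℝ) (x) (i j : Fin m) :
    (gMat f x)⁻¹ i j = (if i = j then (1:ℝ) else 0)
      - pderiv f i x * pderiv f j x / (1 + ‖grad0 f x‖ ^ 2) := by
  have hne : (1 + ‖grad0 f x‖ ^ 2) ≠ 0 := (one_add_pos f x).ne'
  have h : gMat f x * (Matrix.of fun i j => (if i = j then (1:ℝ) else 0)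
      - pderiv f i x * pderiv f j x / (1 + ‖grad0 f x‖ ^ 2)) = 1 := by
    ext i k
    simp only [Matrix.mul_apply, gMat, Matrix.of_apply, Matrix.one_apply]
    have expand : ∀ j ∈ Finset.univ, ((if i = j then (1:ℝ) else 0) + pderiv f i x * pderiv f j x) *
        ((if j = k then (1:ℝ) else 0) - pderiv f j x * pderiv f k x / (1 + ‖grad0 f x‖ ^ 2)) =
        ((if i = j then (1:ℝ) else 0) * (if j = k then (1:ℝ) else 0)
        - (if i = j then (1:ℝ) else 0) * (pderiv f j x * pderiv f k x) / (1 + ‖grad0 f x‖ ^ 2))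
        + (pderiv f i x * (if j = k then (1:ℝ) else 0) * pderiv f j x
        - pderiv f i x * pderiv f k x * pderiv f j x ^2 / (1 + ‖grad0 f x‖ ^ 2)) := by
      intro j _; ring
    rw [Finset.sum_congr rfl expand]
    simp only [Finset.sum_add_distrib, Finset.sum_sub_distrib, ← Finset.sum_div,
      ← Finset.mul_sum, norm_grad0_sq, ite_mul, mul_ite, one_mul, mul_one, zero_mul, mul_zero,
      Finset.sum_ite_eq, Finset.sum_ite_eq', Finset.mem_univ, if_true]
    rcases eq_or_ne i k with rfl | hik
    · simp only [if_pos rfl]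
      field_simp
      ring
    · simp only [if_neg hik]
      field_simp
      ring
  rw [Matrix.inv_eq_right_inv h]
  rfl

lemma ginv_symm (f : EuclideanSpace ℝ (Fin m) → ℝ) (x) (i j : Fin m) :
    (gMat f x)⁻¹ i j = (gMat f x)⁻¹ j i := by
  rw [ginv_eq, ginv_eq]
  rcases eq_or_ne i j with rfl | h
  · ring
  · rw [if_neg h, if_neg (Ne.symm h)]; ring

lemma contDiffOn_pderiv (hD : IsOpen D) {h : EuclideanSpace ℝ (Fin m) → ℝ}
    (hh : ContDiffOn ℝ (⊤ : ℕ∞) h D) (i : Fin m) : ContDiffOn ℝ (⊤ : ℕ∞) (pderiv h i) D :=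
  ((hh.fderiv_of_isOpen hD (by simp)).clm_apply contDiffOn_const)

lemma diffAt (hD : IsOpen D) {h : EuclideanSpace ℝ (Fin m) → ℝ}
    (hh : ContDiffOn ℝ (⊤ : ℕ∞) h D) {x} (hx : x ∈ D) : DifferentiableAt ℝ h x :=
  (hh.differentiableOn (by simp)).differentiableAt (hD.mem_nhds hx)

variable {f : EuclideanSpace ℝ (Fin m) → ℝ}

lemma contDiffOn_den (hD : IsOpen D) (hf : ContDiffOn ℝ (⊤ : ℕ∞) f D) :
    ContDiffOn ℝ (⊤ : ℕ∞) (fun x => 1 + ‖grad0 f x‖ ^ 2) D := by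
  have : ContDiffOn ℝ (⊤ : ℕ∞) (fun x => 1 + ∑ i, pderiv f i x ^ 2) D := by
    apply ContDiffOn.add contDiffOn_const
    apply ContDiffOn.sum
    intro i _
    exact (contDiffOn_pderiv hD hf i).pow 2
  exact this.congr fun x _ => by rw [norm_grad0_sq]

lemma contDiffOn_ginv (hD : IsOpen D) (hf : ContDiffOn ℝ (⊤ : ℕ∞) f D) (i j : Fin m) :
    ContDiffOn ℝ (⊤ : ℕ∞) (fun x => (gMat f x)⁻¹ i j) D := by
  have : ContDiffOn ℝ (⊤ : ℕ∞) (fun x => (if i = j then (1:ℝ) else 0)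
      - pderiv f i x * pderiv f j x / (1 + ‖grad0 f x‖ ^ 2)) D := by
    apply ContDiffOn.sub contDiffOn_const
    exact ContDiffOn.div ((contDiffOn_pderiv hD hf i).mul (contDiffOn_pderiv hD hf j))
      (contDiffOn_den hD hf) (fun x _ => (one_add_pos f x).ne')
  exact this.congr fun x _ => by rw [ginv_eq]

lemma contDiffOn_lapg (hD : IsOpen D) (hf : ContDiffOn ℝ (⊤ : ℕ∞) f D) :
    ContDiffOn ℝ (⊤ : ℕ∞) (lapg f) D := by
  unfold lapg
  apply ContDiffOn.div _ (contDiffOn_den hD hf) (fun x _ => (one_add_pos f x).ne')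
  apply ContDiffOn.sum; intro i _
  apply ContDiffOn.sum; intro j _
  exact (contDiffOn_ginv hD hf i j).mul
    (contDiffOn_pderiv hD (contDiffOn_pderiv hD hf i) j)

lemma contDiffOn_lapBel (hD : IsOpen D) (hf : ContDiffOn ℝ (⊤ : ℕ∞) f D)
    {u : EuclideanSpace ℝ (Fin m) → ℝ} (hu : ContDiffOn ℝ (⊤ : ℕ∞) u D) :
    ContDiffOn ℝ (⊤ : ℕ∞) (lapBel f u) D := by
  unfold lapBel
  apply ContDiffOn.sub
  · apply ContDiffOn.sum; intro i _
    apply ContDiffOn.sum; intro j _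
    exact (contDiffOn_ginv hD hf i j).mul
      (contDiffOn_pderiv hD (contDiffOn_pderiv hD hu i) j)
  · apply (contDiffOn_lapg hD hf).mul
    apply ContDiffOn.sum; intro i _
    exact (contDiffOn_pderiv hD hf i).mul (contDiffOn_pderiv hD hu i)

/-- `Δf` as given by `lapBel` agrees with `lapg`, everywhere. -/
lemma lapBel_self (f : EuclideanSpace ℝ (Fin m) → ℝ) (x) : lapBel f f x = lapg f x := by
  have hne : (1 + ‖grad0 f x‖ ^ 2) ≠ 0 := (one_add_pos f x).ne'
  have hsum : ∑ i, pderiv f i x * pderiv f i x = ‖grad0 f x‖ ^ 2 := by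
    rw [norm_grad0_sq]; exact Finset.sum_congr rfl fun i _ => (sq _).symm
  unfold lapBel lapg
  rw [hsum]
  field_simp
  ring

lemma pderiv_coord (k i : Fin m) (x) :
    pderiv (fun y : EuclideanSpace ℝ (Fin m) => y k) i x = if k = i then 1 else 0 := by
  unfold pderiv
  rw [show fderiv ℝ (fun y : EuclideanSpace ℝ (Fin m) => y k) x = EuclideanSpace.proj k from
    ContinuousLinearMap.fderiv (EuclideanSpace.proj (𝕜 := ℝ) k)]
  show EuclideanSpace.single i (1:ℝ) k = _
  rw [EuclideanSpace.single_apply]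

lemma lapBel_coord (f : EuclideanSpace ℝ (Fin m) → ℝ) (k : Fin m) (x) :
    lapBel f (fun y => y k) x = -(lapg f x * pderiv f k x) := by
  have h1 : ∀ i, pderiv (fun y : EuclideanSpace ℝ (Fin m) => y k) i
      = fun _ => if k = i then (1:ℝ) else 0 := fun i => funext fun y => pderiv_coord k i y
  unfold lapBel
  have h2 : ∀ i j, pderiv (pderiv (fun y : EuclideanSpace ℝ (Fin m) => y k) i) j x = 0 := by
    intro i j
    rw [h1 i]
    simp [pderiv, fderiv_const]
  simp only [h2, mul_zero, Finset.sum_const_zero, zero_sub]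
  congr 1
  congr 1
  rw [Finset.sum_congr rfl (fun i (_ : i ∈ Finset.univ) => by rw [pderiv_coord k i x])]
  simp [Finset.sum_ite_eq, mul_ite]

lemma pderiv_neg (w : EuclideanSpace ℝ (Fin m) → ℝ) (i : Fin m) (x) :
    pderiv (fun y => -(w y)) i x = -(pderiv w i x) := by
  simp [pderiv, fderiv_neg]

lemma lapBel_neg (f w : EuclideanSpace ℝ (Fin m) → ℝ) (x) :
    lapBel f (fun y => -(w y)) x = -(lapBel f w x) := by
  have h1 : ∀ i, pderiv (fun y => -(w y)) i = fun y => -(pderiv w i y) :=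
    fun i => funext fun y => pderiv_neg w i y
  have h2 : ∀ i j, pderiv (pderiv (fun y => -(w y)) i) j x = -(pderiv (pderiv w i) j x) := by
    intro i j; rw [h1 i]; exact pderiv_neg _ j x
  unfold lapBel
  simp only [h2, pderiv_neg, mul_neg, Finset.sum_neg_distrib]
  ring

lemma pderiv_mul {u v : EuclideanSpace ℝ (Fin m) → ℝ} {y}
    (hu : DifferentiableAt ℝ u y) (hv : DifferentiableAt ℝ v y) (i : Fin m) :
    pderiv (fun z => u z * v z) i y = u y * pderiv v i y + v y * pderiv u i y := by
  simp [pderiv, fderiv_fun_mul hu hv]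

lemma pderiv2_mul (hD : IsOpen D) {u v : EuclideanSpace ℝ (Fin m) → ℝ}
    (hu : ContDiffOn ℝ (⊤ : ℕ∞) u D) (hv : ContDiffOn ℝ (⊤ : ℕ∞) v D) {x} (hx : x ∈ D) (i j : Fin m) :
    pderiv (pderiv (fun z => u z * v z) i) j x =
      u x * pderiv (pderiv v i) j x + pderiv u j x * pderiv v i x
      + v x * pderiv (pderiv u i) j x + pderiv v j x * pderiv u i x := by
  have hEq : (pderiv (fun z => u z * v z) i)
      =ᶠ[𝓝 x] fun y => u y * pderiv v i y + v y * pderiv u i y := by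
    filter_upwards [hD.mem_nhds hx] with y hy
    exact pderiv_mul (diffAt hD hu hy) (diffAt hD hv hy) i
  have d1 : DifferentiableAt ℝ u x := diffAt hD hu hx
  have d2 : DifferentiableAt ℝ v x := diffAt hD hv hx
  have d3 : DifferentiableAt ℝ (pderiv v i) x := diffAt hD (contDiffOn_pderiv hD hv i) hx
  have d4 : DifferentiableAt ℝ (pderiv u i) x := diffAt hD (contDiffOn_pderiv hD hu i) hx
  show fderiv ℝ _ x _ = _
  rw [Filter.EventuallyEq.fderiv_eq hEq,
    fderiv_fun_add (d1.fun_mul d3) (d2.fun_mul d4), fderiv_fun_mul d1 d3, fderiv_fun_mul d2 d4]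
  simp only [ContinuousLinearMap.add_apply, ContinuousLinearMap.smul_apply, smul_eq_mul]
  show u x * pderiv (pderiv v i) j x + pderiv v i x * pderiv u j x
    + (v x * pderiv (pderiv u i) j x + pderiv u i x * pderiv v j x) = _
  ring

/-- Product rule for the Laplace–Beltrami operator. -/
lemma lapBel_mul (hD : IsOpen D) (hf : ContDiffOn ℝ (⊤ : ℕ∞) f D)
    {u v : EuclideanSpace ℝ (Fin m) → ℝ}
    (hu : ContDiffOn ℝ (⊤ : ℕ∞) u D) (hv : ContDiffOn ℝ (⊤ : ℕ∞) v D) {x} (hx : x ∈ D) :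
    lapBel f (fun z => u z * v z) x
      = u x * lapBel f v x + v x * lapBel f u x + 2 * gInner f u v x := by
  have cross1 : ∑ i, ∑ j, (gMat f x)⁻¹ i j * (pderiv u j x * pderiv v i x)
      = gInner f u v x := by
    rw [Finset.sum_comm]
    unfold gInner
    refine Finset.sum_congr rfl fun j _ => Finset.sum_congr rfl fun i _ => ?_
    rw [ginv_symm f x i j]; ring
  have cross2 : ∑ i, ∑ j, (gMat f x)⁻¹ i j * (pderiv v j x * pderiv u i x)
      = gInner f u v x := by
    unfold gInner
    refine Finset.sum_congr rfl fun i _ => Finset.sum_congr rfl fun j _ => ?_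
    ring
  have hsum : ∑ i, ∑ j, (gMat f x)⁻¹ i j * pderiv (pderiv (fun z => u z * v z) i) j x
      = u x * (∑ i, ∑ j, (gMat f x)⁻¹ i j * pderiv (pderiv v i) j x)
      + v x * (∑ i, ∑ j, (gMat f x)⁻¹ i j * pderiv (pderiv u i) j x)
      + gInner f u v x + gInner f u v x := by
    have e : ∑ i, ∑ j, (gMat f x)⁻¹ i j * pderiv (pderiv (fun z => u z * v z) i) j x
        = u x * (∑ i, ∑ j, (gMat f x)⁻¹ i j * pderiv (pderiv v i) j x)
        + v x * (∑ i, ∑ j, (gMat f x)⁻¹ i j * pderiv (pderiv u i) j x)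
        + (∑ i, ∑ j, (gMat f x)⁻¹ i j * (pderiv u j x * pderiv v i x))
        + (∑ i, ∑ j, (gMat f x)⁻¹ i j * (pderiv v j x * pderiv u i x)) := by
      simp only [Finset.mul_sum, ← Finset.sum_add_distrib]
      refine Finset.sum_congr rfl fun i _ => Finset.sum_congr rfl fun j _ => ?_
      rw [pderiv2_mul hD hu hv hx i j]; ring
    rw [e, cross1, cross2]
  have hfo : ∑ i, pderiv f i x * pderiv (fun z => u z * v z) i x
      = u x * (∑ i, pderiv f i x * pderiv v i x)
      + v x * (∑ i, pderiv f i x * pderiv u i x) := by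
    simp only [Finset.mul_sum, ← Finset.sum_add_distrib]
    refine Finset.sum_congr rfl fun i _ => ?_
    rw [pderiv_mul (diffAt hD hu hx) (diffAt hD hv hx) i]; ring
  unfold lapBel
  rw [hsum, hfo]
  ring

lemma gInner_symm (f u v : EuclideanSpace ℝ (Fin m) → ℝ) (x) :
    gInner f u v x = gInner f v u x := by
  unfold gInner
  rw [Finset.sum_comm]
  refine Finset.sum_congr rfl fun j _ => Finset.sum_congr rfl fun i _ => ?_
  rw [ginv_symm f x i j]; ring

/-- The key identity: `Δ²x_k = -(f_k Δ²f + (Δf_k)(Δf) + 2 g(∇f_k, ∇Δf))` on `D`. -/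
lemma key_identity (hD : IsOpen D) (hf : ContDiffOn ℝ (⊤ : ℕ∞) f D) (k : Fin m) {x} (hx : x ∈ D) :
    lapBel f (lapBel f (fun y => y k)) x
      = -(pderiv f k x * lapBel f (lapBel f f) x + lapBel f (pderiv f k) x * lapBel f f x
          + 2 * gInner f (pderiv f k) (lapBel f f) x) := by
  have hcoord : lapBel f (fun y => y k) = fun y => -(lapg f y * pderiv f k y) :=
    funext fun y => lapBel_coord f k y
  have hL : lapBel f f = lapg f := funext fun y => lapBel_self f y
  rw [hcoord, lapBel_neg,
    lapBel_mul hD hf (contDiffOn_lapg hD hf) (contDiffOn_pderiv hD hf k) hx, hL,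
    gInner_symm f (pderiv f k) (lapg f) x]
  ring

end Aux

theorem biharmonic_graph_equation
    {m : ℕ} (D : Set (EuclideanSpace ℝ (Fin m))) (hD : IsOpen D)
    (f : EuclideanSpace ℝ (Fin m) → ℝ) (hf : ContDiffOn ℝ (⊤ : ℕ∞) f D) :
    ((∀ k : Fin m, ∀ x ∈ D, lapBel f (lapBel f (fun y => y k)) x = 0) ∧
      (∀ x ∈ D, lapBel f (lapBel f f) x = 0)) ↔
    ((∀ x ∈ D, lapBel f (lapBel f f) x = 0) ∧
      (∀ k : Fin m, ∀ x ∈ D,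
        lapBel f (pderiv f k) x * lapBel f f x +
          2 * gInner f (pderiv f k) (lapBel f f) x = 0)) := by
  constructor
  · rintro ⟨hA, hB⟩
    refine ⟨hB, fun k x hx => ?_⟩
    have h := key_identity hD hf k hx
    rw [hA k x hx, hB x hx] at h
    linarith
  · rintro ⟨hB, hC⟩
    refine ⟨fun k x hx => ?_, hB⟩
    have h := key_identity hD hf k hx
    rw [hB x hx] at h
    have h2 := hC k x hx
    rw [h]
    linarith
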